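/- arXiv:1403.5500 — 2 statements merged into one kernel-verified Lean document; each statement's English description precedes it below -/
import Mathlib

section
/- Let H be an elementary abelian p-group of rank n+1. Define K_n^H recursively over subgroups: K_0^V = 1 for any subgroup V of rank 1, and for a subgroup W of rank m+1 with a fixed choice of order-p subgroup W* ≤ W, set K_{m+1}^W = Σ K_m^V, where the sum ranges over all subgroups V ≤ W of rank m with W* ≰ V. Then K_n^H = p^{n(n+1)/2}. -/
open scoped Classical

private lemma card_eq_pow_finrank_zmod (p : ℕ) [Fact p.Prime] (M : Type*) [AddCommGroup M]
    [Module (ZMod p) M] [Fintype M] : Nat.card M = p ^ Module.finrank (ZMod p) M := by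
  haveI : NeZero p := ⟨(Fact.out : p.Prime).pos.ne'⟩
  rw [Nat.card_eq_fintype_card, Module.card_eq_pow_finrank (K := ZMod p), ZMod.card]

private lemma module_count (p m : ℕ) (hp : p.Prime) (V : Type*) [AddCommGroup V]
    [Module (ZMod p) V] [Fintype V] (hV : Nat.card V = p ^ (m + 2))
    (L : Submodule (ZMod p) V) (hL : Nat.card L = p) :
    Nat.card {U : Submodule (ZMod p) V // Nat.card U = p ^ (m + 1) ∧ ¬L ≤ U} = p ^ (m + 1) := by
  haveI := Fact.mk hp
  haveI : Module.Finite (ZMod p) V := Module.Finite.of_finite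
  have hpinj : Function.Injective (p ^ · : ℕ → ℕ) := Nat.pow_right_injective hp.two_le
  have cardU : ∀ U : Submodule (ZMod p) V,
      Nat.card U = p ^ Module.finrank (ZMod p) U := fun U =>
    card_eq_pow_finrank_zmod p U
  have hfV : Module.finrank (ZMod p) V = m + 2 :=
    hpinj (by show p ^ _ = p ^ _; rw [← card_eq_pow_finrank_zmod p V, hV])
  have hfL : Module.finrank (ZMod p) L = 1 := hpinj (by show p ^ _ = p ^ _; rw [← cardU, hL, pow_one])
  have key : ∀ U : Submodule (ZMod p) V,
      (Nat.card U = p ^ (m + 1) ∧ ¬L ≤ U) ↔ IsCompl L U := by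
    intro U
    constructor
    · rintro ⟨hU, hle⟩
      have hfU : Module.finrank (ZMod p) U = m + 1 := hpinj (by show p ^ _ = p ^ _; rw [← cardU, hU])
      have hlt : L ⊓ U < L := lt_of_le_of_ne inf_le_left (fun h => hle (by
        rw [inf_eq_left] at h; exact h))
      have h0 : Module.finrank (ZMod p) ↥(L ⊓ U) = 0 := by
        have := Submodule.finrank_lt_finrank_of_lt hlt
        omega
      have hbot : L ⊓ U = ⊥ := Submodule.finrank_eq_zero.mp h0
      have hsum := Submodule.finrank_sup_add_finrank_inf_eq L U
      rw [hbot, finrank_bot, add_zero, hfL, hfU] at hsum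
      have htop : L ⊔ U = ⊤ := Submodule.eq_top_of_finrank_eq (by rw [hsum, hfV]; omega)
      exact ⟨disjoint_iff.mpr hbot, codisjoint_iff.mpr htop⟩
    · intro hc
      have hsum := Submodule.finrank_sup_add_finrank_inf_eq L U
      rw [hc.disjoint.eq_bot, hc.codisjoint.eq_top, finrank_bot, add_zero, hfL,
        finrank_top] at hsum
      have hfU : Module.finrank (ZMod p) U = m + 1 := by rw [hfV] at hsum; omega
      refine ⟨by rw [cardU, hfU], fun hcon => ?_⟩
      have : L = ⊥ := hc.disjoint.eq_bot_of_le hcon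
      rw [this] at hfL
      simp [finrank_bot] at hfL
  obtain ⟨q, hq⟩ := Submodule.exists_isCompl L
  set f₀ : {f : V →ₗ[ZMod p] L // ∀ x : L, f x = x} := L.isComplEquivProj ⟨q, hq⟩
  have e1 : {f : V →ₗ[ZMod p] L // ∀ x : L, f x = x} ≃
      {g : V →ₗ[ZMod p] L // ∀ x : L, g x = 0} :=
    { toFun := fun f => ⟨f.1 - f₀.1, fun x => by
        simp [LinearMap.sub_apply, f.2 x, f₀.2 x]⟩
      invFun := fun g => ⟨g.1 + f₀.1, fun x => by
        simp [LinearMap.add_apply, g.2 x, f₀.2 x]⟩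
      left_inv := fun f => by ext x : 2; simp
      right_inv := fun g => by ext x : 2; simp }
  have e2 : {g : V →ₗ[ZMod p] L // ∀ x : L, g x = 0} ≃ ((V ⧸ L) →ₗ[ZMod p] L) :=
    { toFun := fun g => L.liftQ g.1 (fun x hx => by
        rw [LinearMap.mem_ker]; exact g.2 ⟨x, hx⟩)
      invFun := fun h => ⟨h.comp L.mkQ, fun x => by
        have : L.mkQ ↑x = 0 := by
          rw [Submodule.mkQ_apply, Submodule.Quotient.mk_eq_zero]; exact x.2
        simp [LinearMap.comp_apply, this]⟩
      left_inv := fun g => Subtype.ext (L.liftQ_mkQ g.1 _)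
      right_inv := fun h => Submodule.linearMap_qext _ (L.liftQ_mkQ (h.comp L.mkQ) _) }
  have hquot : Module.finrank (ZMod p) (V ⧸ L) = m + 1 := by
    have := Submodule.finrank_quotient_add_finrank L
    rw [hfL, hfV] at this; omega
  calc Nat.card {U : Submodule (ZMod p) V // Nat.card U = p ^ (m + 1) ∧ ¬L ≤ U}
      = Nat.card {U : Submodule (ZMod p) V // IsCompl L U} :=
        Nat.card_congr (Equiv.subtypeEquivRight key)
    _ = Nat.card ((V ⧸ L) →ₗ[ZMod p] L) :=
        Nat.card_congr ((L.isComplEquivProj.trans e1).trans e2)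
    _ = p ^ (m + 1) := by
        have b := Module.Free.chooseBasis (ZMod p) (V ⧸ L)
        rw [← Nat.card_congr (b.constr (ZMod p) (M' := L)).toEquiv, Nat.card_fun, hL,
          Nat.card_eq_fintype_card, ← Module.finrank_eq_card_chooseBasisIndex, hquot]

private def zmodModuleOfPow (p : ℕ) (M : Type*) [AddCommGroup M] (h : ∀ x : M, p • x = 0) :
    Module (ZMod p) M := AddCommGroup.zmodModule h

private lemma group_count (p m : ℕ) (hp : p.Prime) (G : Type*) [CommGroup G] [Fintype G]
    (helem : ∀ x : G, x ^ p = 1) (hG : Nat.card G = p ^ (m + 2))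
    (L : Subgroup G) (hL : Nat.card L = p) :
    Nat.card {U : Subgroup G // Nat.card U = p ^ (m + 1) ∧ ¬L ≤ U} = p ^ (m + 1) := by
  letI : Module (ZMod p) (Additive G) := zmodModuleOfPow p (Additive G) (by
    intro x
    apply Additive.toMul.injective
    rw [toMul_nsmul, toMul_zero]
    exact helem _)
  let e : Subgroup G ≃o Submodule (ZMod p) (Additive G) :=
    (Subgroup.toAddSubgroup (G := G)).trans (AddSubgroup.toZModSubmodule (M := Additive G) p)
  have hcardS : ∀ S : Subgroup G, Nat.card (e S) = Nat.card S := fun S => rfl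
  have := module_count p m hp (Additive G) (hG ▸ Nat.card_congr Additive.ofMul.symm) (e L)
    (by rw [hcardS, hL])
  refine Eq.trans ?_ this
  apply Nat.card_congr
  exact Equiv.subtypeEquiv e.toEquiv (fun U =>
    ⟨fun h => ⟨(hcardS U).trans h.1, fun hc => h.2 (e.le_iff_le.mp hc)⟩,
     fun h => ⟨(hcardS U).symm.trans h.1, fun hc => h.2 (e.le_iff_le.mpr hc)⟩⟩)


/-- Let `H` be an elementary abelian `p`-group of rank `n+1`.  For any
assignment `W ↦ W*` of an order-`p` subgroup to each nontrivial subgroup `W ≤ H`, and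
any function `K` satisfying the recursion `K 0 V = 1` for rank-1 subgroups `V`, and
`K (m+1) W = Σ_{V ≤ W, rank V = m, W* ≰ V} K m V` for rank-`(m+1)` subgroups `W`,
one has `K n ⊤ = p ^ (n (n+1) / 2)`. -/
theorem quillen_K_number
    {H : Type*} [CommGroup H] [Fintype H] (p n : ℕ) (hp : p.Prime)
    (helem : ∀ x : H, x ^ p = 1)
    (hcard : Nat.card H = p ^ (n + 1))
    (star : Subgroup H → Subgroup H)
    (hstar_le : ∀ W : Subgroup H, W ≠ ⊥ → star W ≤ W)
    (hstar_card : ∀ W : Subgroup H, W ≠ ⊥ → Nat.card (star W) = p)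
    (K : ℕ → Subgroup H → ℕ)
    (hK0 : ∀ V : Subgroup H, Nat.card V = p ^ 1 → K 0 V = 1)
    (hKrec : ∀ m : ℕ, ∀ W : Subgroup H, Nat.card W = p ^ (m + 2) →
      K (m + 1) W =
        ∑ V ∈ Finset.univ.filter
            (fun V : Subgroup H => V ≤ W ∧ Nat.card V = p ^ (m + 1) ∧ ¬ star W ≤ V),
          K m V) :
    K n ⊤ = p ^ (n * (n + 1) / 2) := by
  have key : ∀ m : ℕ, ∀ W : Subgroup H, Nat.card W = p ^ (m + 1) →
      K m W = p ^ (m * (m + 1) / 2) := by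
    intro m
    induction m with
    | zero =>
      intro W hW
      simpa using hK0 W hW
    | succ m ih =>
      intro W hW
      have hWbot : W ≠ ⊥ := by
        intro h
        rw [h, Subgroup.card_bot] at hW
        have := Nat.one_lt_pow (n := m + 1 + 1) (by omega) hp.one_lt
        omega
      rw [hKrec m W hW]
      set s := Finset.univ.filter
        (fun V : Subgroup H => V ≤ W ∧ Nat.card V = p ^ (m + 1) ∧ ¬ star W ≤ V) with hs
      have hterm : ∀ V ∈ s, K m V = p ^ (m * (m + 1) / 2) := by
        intro V hV
        rw [hs, Finset.mem_filter] at hV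
        exact ih V hV.2.2.1
      rw [Finset.sum_congr rfl hterm, Finset.sum_const, smul_eq_mul]
      have hWelem : ∀ x : ↥W, x ^ p = 1 := by
        intro x
        apply Subtype.coe_injective
        push_cast
        exact helem x
      have hLcard : Nat.card ((star W).subgroupOf W) = p := by
        rw [Nat.card_congr (Subgroup.subgroupOfEquivOfLe (hstar_le W hWbot)).toEquiv]
        exact hstar_card W hWbot
      have hcount := group_count p m hp (↥W) hWelem hW ((star W).subgroupOf W) hLcard
      have hEquiv : {V : Subgroup H // V ≤ W ∧ Nat.card V = p ^ (m + 1) ∧ ¬ star W ≤ V} ≃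
          {U : Subgroup ↥W // Nat.card U = p ^ (m + 1) ∧ ¬ (star W).subgroupOf W ≤ U} := by
      { refine ⟨fun V => ⟨V.1.subgroupOf W, ?_, ?_⟩, fun U => ⟨U.1.map W.subtype, ?_, ?_, ?_⟩,
          ?_, ?_⟩
        · rw [Nat.card_congr (Subgroup.subgroupOfEquivOfLe V.2.1).toEquiv]
          exact V.2.2.1
        · intro hc
          apply V.2.2.2
          have h2 := Subgroup.map_subtype_le_map_subtype.mpr hc
          rwa [Subgroup.subgroupOf_map_subtype, Subgroup.subgroupOf_map_subtype,
            inf_eq_left.mpr (hstar_le W hWbot), inf_eq_left.mpr V.2.1] at h2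
        · exact Subgroup.map_subtype_le U.1
        · rw [← Nat.card_congr (Subgroup.equivMapOfInjective U.1 W.subtype
            W.subtype_injective).toEquiv]
          exact U.2.1
        · intro hc
          apply U.2.2
          have h2 := Subgroup.comap_mono (f := W.subtype) hc
          rwa [Subgroup.comap_map_eq_self_of_injective W.subtype_injective] at h2
        · intro V
          apply Subtype.ext
          simp only
          rw [Subgroup.subgroupOf_map_subtype, inf_eq_left.mpr V.2.1]
        · intro U
          apply Subtype.ext
          simp only
          exact Subgroup.comap_map_eq_self_of_injective W.subtype_injective U.1 }
      have hscard : s.card = p ^ (m + 1) := by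
        have h1 : s.card =
            Nat.card {V : Subgroup H // V ≤ W ∧ Nat.card V = p ^ (m + 1) ∧ ¬ star W ≤ V} := by
          rw [Nat.card_eq_fintype_card, Fintype.card_subtype]
        rw [h1, Nat.card_congr hEquiv, hcount]
      rw [hscard, ← pow_add]
      congr 1
      have h2 : (m + 1) * (m + 1 + 1) = m * (m + 1) + (m + 1) * 2 := by ring
      rw [h2, Nat.add_mul_div_right _ _ (by norm_num : 0 < 2)]
      omega
  exact key n ⊤ (by rw [Subgroup.card_top, hcard])
end

section
/- Let P be a graded poset equipped with a local covering family K = {(K_p, η_p)}_{p∈P}. Then for every p ∈ P with dim p ≥ 1, the subposet I = P_{<p} \ (K_p)_{dim p − 1} is conically contractible: the map f: I → I defined by f(x) = x if x ∉ K_p and f(x) = η_p(x) if x ∈ K_p is a well-defined order-preserving map satisfying x ≤ f(x) ≥ η_p(0̂) for all x ∈ I. -/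
open scoped Classical

/-- The dimension function on the augmented poset `P̂ = WithBot P`: `dim 0̂ = -1` and
`dim p` as given on `P`, with values in `ℤ`. -/
def edim {P : Type*} (dim : P → ℕ) : WithBot P → ℤ :=
  WithBot.recBotCoe (-1) (fun p => (dim p : ℤ))

/-- A local covering family on a graded poset `P` (with augmentation `P̂ = WithBot P`,
`0̂ = ⊥`): for each `p ∈ P`, a subset `K p ⊆ P̂_{≤ p}` containing `0̂` and a map
`η p : K p → P̂_{≤ p} \ K p` satisfying conditions (1)–(5) of the definition of a local
covering family.  (`η p` is encoded as a total function whose values only matter on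
`K p`.) -/
structure LocalCoveringFamily (P : Type*) [PartialOrder P] (dim : P → ℕ) where
  K : P → Set (WithBot P)
  η : P → WithBot P → WithBot P
  K_le : ∀ p : P, K p ⊆ Set.Iic (p : WithBot P)
  bot_mem : ∀ p : P, ⊥ ∈ K p
  η_le : ∀ p : P, ∀ r ∈ K p, η p r ≤ (p : WithBot P)
  η_not_mem : ∀ p : P, ∀ r ∈ K p, η p r ∉ K p
  lt_η : ∀ p : P, ∀ r ∈ K p, r < η p r
  dim_η : ∀ p : P, ∀ r ∈ K p, edim dim (η p r) = edim dim r + 1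
  η_bot_eq : ∀ p q : P, q ≤ p → (q : WithBot P) ∉ K p → η p ⊥ = η q ⊥
  η_mono : ∀ p : P, ∀ q ∈ K p, ∀ r ∈ K p, q ≤ r → η p q ≤ η p r
  η_le_of_not_mem : ∀ p : P, ∀ q ∈ K p, ∀ r : WithBot P,
      r ∉ K p → q ≤ r → r ≤ (p : WithBot P) → η p q ≤ r

/-- Let `P` be a graded poset with a local covering family `F`.  For every
`p ∈ P` with `n = dim p ≥ 1`, the subposet `I = P_{<p} \ (K_p)_{n-1}` is conically
contractible via the map `f(x) = η_p(x)` for `x ∈ K_p` and `f(x) = x` otherwise: `f` is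
well defined (maps `I` into `I`), order-preserving, and satisfies
`x ≤ f x ≥ η_p(0̂)` for all `x ∈ I`. -/
theorem conically_contractible_complement
    {P : Type*} [PartialOrder P] (dim : P → ℕ)
    (hmin : ∀ a : P, IsMin a → dim a = 0)
    (hcov : ∀ a b : P, a ⋖ b → dim b = dim a + 1)
    (F : LocalCoveringFamily P dim)
    (p : P) (hp : 1 ≤ dim p) :
    let n := dim p
    let I : Set P := {x : P | x < p ∧ ¬ ((x : WithBot P) ∈ F.K p ∧ dim x = n - 1)}
    let f : P → WithBot P := fun x =>
      if (x : WithBot P) ∈ F.K p then F.η p (x : WithBot P) else (x : WithBot P)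
    (∀ x ∈ I, ∃ y ∈ I, f x = (y : WithBot P)) ∧
    (∀ x ∈ I, ∀ y ∈ I, x ≤ y → f x ≤ f y) ∧
    (∀ x ∈ I, (x : WithBot P) ≤ f x ∧ F.η p ⊥ ≤ f x) := by
  intro n I f
  refine ⟨?_, ?_, ?_⟩
  · intro x hx
    by_cases hxK : (x : WithBot P) ∈ F.K p
    · -- f x = η p x
      have hdim := F.dim_η p _ hxK
      have hne : F.η p (x : WithBot P) ≠ ⊥ := by
        intro h
        rw [h] at hdim
        simp [edim] at hdim
        omega
      obtain ⟨y, hy⟩ := WithBot.ne_bot_iff_exists.mp hne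
      refine ⟨y, ⟨?_, ?_⟩, by simp [f, hxK, hy.symm]⟩
      · have hle : (y : WithBot P) ≤ (p : WithBot P) := hy ▸ F.η_le p _ hxK
        have hle' : y ≤ p := WithBot.coe_le_coe.mp hle
        rcases lt_or_eq_of_le hle' with h | h
        · exact h
        · exfalso
          have hdy : (dim y : ℤ) = edim dim (x : WithBot P) + 1 := by
            rw [← hdim, ← hy]; rfl
          have hned : ¬ dim x = n - 1 := fun hd => hx.2 ⟨hxK, hd⟩
          have hed : edim dim (x : WithBot P) = (dim x : ℤ) := rfl
          have hn : n = dim p := rfl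
          rw [hed, h] at hdy
          omega
      · intro ⟨hyK, _⟩
        exact F.η_not_mem p _ hxK (hy ▸ hyK)
    · exact ⟨x, hx, by simp [f, hxK]⟩
  · intro x hx y hy hxy
    by_cases hxK : (x : WithBot P) ∈ F.K p <;> by_cases hyK : (y : WithBot P) ∈ F.K p
    · simpa [f, hxK, hyK] using F.η_mono p _ hxK _ hyK (WithBot.coe_le_coe.mpr hxy)
    · simpa [f, hxK, hyK] using
        F.η_le_of_not_mem p _ hxK _ hyK (WithBot.coe_le_coe.mpr hxy)
          (WithBot.coe_le_coe.mpr hy.1.le)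
    · simp only [f, if_pos hyK, if_neg hxK]
      exact le_trans (WithBot.coe_le_coe.mpr hxy) (F.lt_η p _ hyK).le
    · simpa [f, hxK, hyK] using WithBot.coe_le_coe.mpr hxy
  · intro x hx
    by_cases hxK : (x : WithBot P) ∈ F.K p
    · refine ⟨by simp [f, hxK, (F.lt_η p _ hxK).le], ?_⟩
      simpa [f, hxK] using F.η_mono p _ (F.bot_mem p) _ hxK bot_le
    · refine ⟨by simp [f, hxK], ?_⟩
      simpa [f, hxK] using
        F.η_le_of_not_mem p _ (F.bot_mem p) _ hxK bot_le
          (WithBot.coe_le_coe.mpr hx.1.le)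
end
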